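/- Let S, T, C be finsets of ι and let a, b ∈ ι be distinct elements with a ∉ C, b ∉ C, a ∉ S ∪ T and b ∉ S ∪ T. Then (m_S * F_{C ∪ {a}}) * (m_T * F_{C ∪ {b}}) = m_{S ∪ T ∪ {a,b}} * F_C + m_{S ∪ T} * F_C + m_{S ∪ T ∪ {a,b}} in R (the semantic identity underlying multiplication rule 24 of the Multiplication Rewriting Principle, where U \ V = {a}, V \ U = {b} and U ∩ V = C). -/

import Mathlib

/-!
Every Boolean function is idempotent, and `F U = ∏ i ∈ U, (1 + m {i}) - 1`. Over idempotents the
product over `U ∪ V` is the product over `U` times the product over `V`, overlap or not, so with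
`P = F C + 1` both sides become polynomials in `m S`, `m T`, `m {a}`, `m {b}` and `P`, which agree
because `P² = P` and `2 = 0`.
-/

variable {ι : Type*} [DecidableEq ι]

/-- Monomial semantics: `m S` evaluates an assignment `a` to `∏ i ∈ S, a i`. -/
def m (S : Finset ι) : (ι → ZMod 2) → ZMod 2 :=
  fun a => ∏ i ∈ S, a i

/-- Power-set sum semantics: `F U` evaluates `a` to the sum over nonempty subsets `A ⊆ U`
of `∏ i ∈ A, a i`. -/
def F (U : Finset ι) : (ι → ZMod 2) → ZMod 2 :=
  fun a => ∑ A ∈ U.powerset.erase ∅, ∏ i ∈ A, a i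

namespace Finset

variable {κ M : Type*} [CommMonoid M] {f : κ → M}

theorem isIdempotentElem_prod (s : Finset κ) (hf : ∀ i ∈ s, IsIdempotentElem (f i)) :
    IsIdempotentElem (∏ i ∈ s, f i) :=
  prod_induction f _ (fun _ _ => IsIdempotentElem.mul) .one hf

theorem prod_union_of_isIdempotentElem [DecidableEq κ] (s t : Finset κ)
    (hf : ∀ i ∈ s ∩ t, IsIdempotentElem (f i)) :
    ∏ i ∈ s ∪ t, f i = (∏ i ∈ s, f i) * ∏ i ∈ t, f i := by
  rw [← prod_union_inter, ← prod_sdiff (inter_subset_left.trans subset_union_left), mul_assoc,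
    (isIdempotentElem_prod _ hf).eq]

end Finset

theorem Pi.isIdempotentElem_zmod_two {α : Type*} (f : α → ZMod 2) : IsIdempotentElem f :=
  funext fun a => (by decide : ∀ z : ZMod 2, z * z = z) (f a)

theorem Pi.two_eq_zero_zmod_two {α : Type*} : (2 : α → ZMod 2) = 0 :=
  funext fun _ => rfl

omit [DecidableEq ι] in
theorem m_eq_prod (S : Finset ι) : m S = ∏ i ∈ S, m {i} := by
  ext a
  simp [m, Finset.prod_apply]

theorem F_eq_prod_one_add_sub_one (U : Finset ι) : F U = ∏ i ∈ U, (1 + m {i}) - 1 := by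
  ext a
  simp [F, m, Finset.prod_apply, Finset.prod_one_add, Finset.sum_erase_eq_sub]

theorem m_union (S T : Finset ι) : m (S ∪ T) = m S * m T := by
  simp only [m_eq_prod (S ∪ T), m_eq_prod S, m_eq_prod T]
  exact Finset.prod_union_of_isIdempotentElem S T fun _ _ => Pi.isIdempotentElem_zmod_two _

theorem F_union_singleton (C : Finset ι) (c : ι) :
    F (C ∪ {c}) = (F C + 1) * (1 + m {c}) - 1 := by
  rw [F_eq_prod_one_add_sub_one, F_eq_prod_one_add_sub_one, sub_add_cancel,
    Finset.prod_union_of_isIdempotentElem _ _ fun _ _ => Pi.isIdempotentElem_zmod_two _,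
    Finset.prod_singleton]

theorem stmt18_general (S T C : Finset ι) (a b : ι) :
    (m S * F (C ∪ {a})) * (m T * F (C ∪ {b}))
      = m (S ∪ T ∪ {a, b}) * F C + m (S ∪ T) * F C + m (S ∪ T ∪ {a, b}) := by
  rw [F_union_singleton, F_union_singleton, Finset.insert_eq, m_union, m_union, m_union]
  linear_combination (m S * m T * (1 + m {a}) * (1 + m {b})) *
      (Pi.isIdempotentElem_zmod_two (F C + 1)).eq - (m S * m T * F C) * Pi.two_eq_zero_zmod_two

theorem stmt18 (S T C : Finset ι) (a b : ι)
    (hab : a ≠ b) (haC : a ∉ C) (hbC : b ∉ C)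
    (haST : a ∉ S ∪ T) (hbST : b ∉ S ∪ T) :
    (m S * F (C ∪ {a})) * (m T * F (C ∪ {b}))
      = m (S ∪ T ∪ {a, b}) * F C + m (S ∪ T) * F C + m (S ∪ T ∪ {a, b}) :=
  stmt18_general S T C a b
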